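/- Let π denote the prime counting function and r > 1 a real, x > 0. Then C_r(x) = −Σ_{p ≤ √x} π(p) + Σ_{p ≤ √(x/r)} π(r*p) + Σ_{√(x/r) < p ≤ √x} π(x/p), where C_r(x) counts integers n ≤ x of the form n = p*q with p, q prime and p < q ≤ r*p, and all sums range over primes p. -/

import Mathlib

/-!
Counting each `n = p * q` by its smaller prime factor `p` (unique, as `p = n.minFac`), the
condition `n ≤ x` forces `p ≤ √x`, and the admissible `q` are the primes in
`(p, min (r * p) (x / p)]`, of which there are `π (min (r * p) (x / p)) - π p`.
The minimum is `r * p` exactly when `p ≤ √(x / r)`.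
-/

/-- `pi y` is the number of primes `p ≤ y`. -/
noncomputable def pi (y : ℝ) : ℕ := ((Finset.range (⌊y⌋₊ + 1)).filter Nat.Prime).card

/-- `C r x` is the number of integers `n ≤ x` of the form `n = p*q`
with `p, q` primes and `p < q ≤ r*p`. -/
noncomputable def C (r x : ℝ) : ℕ :=
  {n : ℕ | (n : ℝ) ≤ x ∧ ∃ p q : ℕ, p.Prime ∧ q.Prime ∧ p < q ∧
      (q : ℝ) ≤ r * p ∧ n = p * q}.ncard

noncomputable def primesUpTo (y : ℝ) : Finset ℕ := (Finset.range (⌊y⌋₊ + 1)).filter Nat.Prime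

lemma pi_eq_card_primesUpTo (y : ℝ) : pi y = (primesUpTo y).card := rfl

lemma mem_primesUpTo {y : ℝ} {p : ℕ} : p ∈ primesUpTo y ↔ p.Prime ∧ (p : ℝ) ≤ y := by
  rw [primesUpTo, Finset.mem_filter, Finset.mem_range, Nat.lt_succ_iff, and_comm]
  exact and_congr_right fun hp => Nat.le_floor_iff' hp.ne_zero

lemma mem_primesUpTo_sqrt {y : ℝ} {p : ℕ} :
    p ∈ primesUpTo √y ↔ p.Prime ∧ (p : ℝ) * p ≤ y := by
  rw [mem_primesUpTo]
  exact and_congr_right fun hp => by rw [Real.le_sqrt' (by exact_mod_cast hp.pos), sq]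

lemma pi_add_card_primes_gt {a b : ℝ} (hab : a ≤ b) :
    pi a + ((primesUpTo b).filter fun q : ℕ => a < q).card = pi b := by
  have hle : ((primesUpTo b).filter fun q : ℕ => ¬ a < q) = primesUpTo a := by
    ext q
    simp only [Finset.mem_filter, mem_primesUpTo, not_lt]
    exact ⟨fun ⟨⟨hq, _⟩, hqa⟩ => ⟨hq, hqa⟩, fun ⟨hq, hqa⟩ => ⟨⟨hq, hqa.trans hab⟩, hqa⟩⟩
  rw [pi_eq_card_primesUpTo, pi_eq_card_primesUpTo, ← hle, add_comm,
    Finset.card_filter_add_card_filter_not]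

lemma Nat.minFac_mul_of_prime_of_le {p q : ℕ} (hp : p.Prime) (hq : q.Prime) (hpq : p ≤ q) :
    (p * q).minFac = p := by
  have hmin : (p * q).minFac ≤ p := Nat.minFac_le_of_dvd hp.two_le (dvd_mul_right p q)
  have hmf : (p * q).minFac.Prime :=
    Nat.minFac_prime fun h => hp.ne_one (Nat.eq_one_of_mul_eq_one_right h)
  rcases hmf.dvd_mul.mp (Nat.minFac_dvd (p * q)) with h | h
  · exact (Nat.prime_dvd_prime_iff_eq hmf hp).mp h
  · have := (Nat.prime_dvd_prime_iff_eq hmf hq).mp h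
    omega

lemma injOn_mul_of_prime_of_lt :
    Set.InjOn (fun pq : (_ : ℕ) × ℕ => pq.1 * pq.2)
      {pq | pq.1.Prime ∧ pq.2.Prime ∧ pq.1 < pq.2} := by
  rintro ⟨p, q⟩ ⟨hp, hq, hpq⟩ ⟨p', q'⟩ ⟨hp', hq', hpq'⟩ (h : p * q = p' * q')
  dsimp only at hp hq hpq hp' hq' hpq'
  have hpp' : p = p' := by
    rw [← Nat.minFac_mul_of_prime_of_le hp hq hpq.le, h,
      Nat.minFac_mul_of_prime_of_le hp' hq' hpq'.le]
  subst hpp'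
  rw [Nat.eq_of_mul_eq_mul_left hp.pos h]

noncomputable def primePairs (r x : ℝ) : Finset ((_ : ℕ) × ℕ) :=
  (primesUpTo √x).sigma fun p => (primesUpTo (min (r * p) (x / p))).filter fun q => p < q

lemma mem_primePairs {r x : ℝ} {pq : (_ : ℕ) × ℕ} :
    pq ∈ primePairs r x ↔ pq.1.Prime ∧ pq.2.Prime ∧ pq.1 < pq.2 ∧
      (pq.2 : ℝ) ≤ r * pq.1 ∧ ((pq.1 * pq.2 : ℕ) : ℝ) ≤ x := by
  obtain ⟨p, q⟩ := pq
  simp only [primePairs, Finset.mem_sigma, Finset.mem_filter, mem_primesUpTo_sqrt]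
  simp only [mem_primesUpTo, le_min_iff, Nat.cast_mul]
  constructor
  · rintro ⟨⟨hp, -⟩, ⟨hq, hqr, hqx⟩, hpq⟩
    have hp0 : (0 : ℝ) < p := by exact_mod_cast hp.pos
    exact ⟨hp, hq, hpq, hqr, by rwa [le_div_iff₀ hp0, mul_comm] at hqx⟩
  · rintro ⟨hp, hq, hpq, hqr, hx⟩
    have hp0 : (0 : ℝ) < p := by exact_mod_cast hp.pos
    have hpq' : (p : ℝ) ≤ q := by exact_mod_cast hpq.le
    refine ⟨⟨hp, ?_⟩, ⟨hq, hqr, ?_⟩, hpq⟩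
    · nlinarith
    · rwa [le_div_iff₀ hp0, mul_comm]

lemma C_eq_card_primePairs (r x : ℝ) : C r x = (primePairs r x).card := by
  have hC : {n : ℕ | (n : ℝ) ≤ x ∧ ∃ p q : ℕ, p.Prime ∧ q.Prime ∧ p < q ∧
      (q : ℝ) ≤ r * p ∧ n = p * q} = (primePairs r x).image fun pq => pq.1 * pq.2 := by
    ext n
    simp only [Set.mem_ofPred_eq, Finset.coe_image, Set.mem_image, Finset.mem_coe,
      mem_primePairs, Sigma.exists]
    constructor
    · rintro ⟨hn, p, q, hp, hq, hpq, hqr, rfl⟩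
      exact ⟨p, q, ⟨hp, hq, hpq, hqr, hn⟩, rfl⟩
    · rintro ⟨p, q, ⟨hp, hq, hpq, hqr, hx⟩, rfl⟩
      exact ⟨hx, p, q, hp, hq, hpq, hqr, rfl⟩
  rw [C, hC, Set.ncard_coe_finset, Finset.card_image_of_injOn]
  refine injOn_mul_of_prime_of_lt.mono fun pq hpq => ?_
  obtain ⟨hp, hq, hlt, -⟩ := mem_primePairs.mp hpq
  exact ⟨hp, hq, hlt⟩

lemma C_eq_sum_pi_min {r : ℝ} (hr : 1 ≤ r) (x : ℝ) :
    (C r x : ℝ) = ∑ p ∈ primesUpTo √x, ((pi (min (r * p) (x / p)) : ℝ) - pi p) := by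
  rw [C_eq_card_primePairs, primePairs, Finset.card_sigma, Nat.cast_sum]
  refine Finset.sum_congr rfl fun p hp => ?_
  obtain ⟨hp, hpx⟩ := mem_primesUpTo_sqrt.mp hp
  have hp0 : (0 : ℝ) < p := by exact_mod_cast hp.pos
  have hp_le : (p : ℝ) ≤ min (r * p) (x / p) :=
    le_min (le_mul_of_one_le_left hp0.le hr) ((le_div_iff₀ hp0).mpr hpx)
  rw [← pi_add_card_primes_gt hp_le]
  simp only [Nat.cast_lt, Nat.cast_add]
  ring

lemma mul_le_div_iff_le_sqrt_div {r x a : ℝ} (hr : 0 < r) (ha : 0 < a) :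
    r * a ≤ x / a ↔ a ≤ √(x / r) := by
  rw [le_div_iff₀ ha, Real.le_sqrt' ha, le_div_iff₀ hr, sq, mul_comm (a * a), mul_assoc]

lemma primesUpTo_sqrt_div_eq_filter {r : ℝ} (hr : 1 ≤ r) (x : ℝ) :
    primesUpTo √(x / r) = (primesUpTo √x).filter fun p : ℕ => (p : ℝ) ≤ √(x / r) := by
  ext p
  simp only [Finset.mem_filter, mem_primesUpTo]
  have hsqrt : √(x / r) ≤ √x := by
    rw [Real.sqrt_div' x (zero_le_one.trans hr)]
    exact div_le_self (Real.sqrt_nonneg x) (Real.one_le_sqrt.mpr hr)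
  exact ⟨fun ⟨hp, hpr⟩ => ⟨⟨hp, hpr.trans hsqrt⟩, hpr⟩, fun ⟨⟨hp, _⟩, hpr⟩ => ⟨hp, hpr⟩⟩

theorem stmt_7_general (x r : ℝ) (hr : 1 < r) :
    (C r x : ℝ) =
      -(∑ p ∈ (Finset.range (⌊Real.sqrt x⌋₊ + 1)).filter Nat.Prime, (pi (p : ℝ) : ℝ))
      + ∑ p ∈ (Finset.range (⌊Real.sqrt (x / r)⌋₊ + 1)).filter Nat.Prime, (pi (r * p) : ℝ)
      + ∑ p ∈ ((Finset.range (⌊Real.sqrt x⌋₊ + 1)).filter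
          (fun p => Nat.Prime p ∧ Real.sqrt (x / r) < (p : ℝ))), (pi (x / p) : ℝ) := by
  have hr0 : 0 < r := one_pos.trans hr
  have hmin_small : ∀ p ∈ (primesUpTo √x).filter fun p : ℕ => (p : ℝ) ≤ √(x / r),
      (pi (min (r * p) (x / p)) : ℝ) = pi (r * p) := by
    intro p hp
    rw [Finset.mem_filter, mem_primesUpTo] at hp
    obtain ⟨⟨hp, -⟩, hpr⟩ := hp
    rw [min_eq_left ((mul_le_div_iff_le_sqrt_div hr0 (by exact_mod_cast hp.pos)).mpr hpr)]
  have hmin_large : ∀ p ∈ (primesUpTo √x).filter fun p : ℕ => ¬ (p : ℝ) ≤ √(x / r),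
      (pi (min (r * p) (x / p)) : ℝ) = pi (x / p) := by
    intro p hp
    rw [Finset.mem_filter, mem_primesUpTo] at hp
    obtain ⟨⟨hp, -⟩, hpr⟩ := hp
    rw [min_eq_right (not_le.mp (mt (mul_le_div_iff_le_sqrt_div hr0
      (by exact_mod_cast hp.pos)).mp hpr)).le]
  rw [← Finset.filter_filter]
  change _ = -∑ p ∈ primesUpTo √x, (pi p : ℝ) + ∑ p ∈ primesUpTo √(x / r), (pi (r * p) : ℝ)
    + ∑ p ∈ (primesUpTo √x).filter fun p : ℕ => √(x / r) < p, (pi (x / p) : ℝ)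
  rw [C_eq_sum_pi_min hr.le, Finset.sum_sub_distrib,
    ← Finset.sum_filter_add_sum_filter_not _ fun p : ℕ => (p : ℝ) ≤ √(x / r),
    Finset.sum_congr rfl hmin_small, Finset.sum_congr rfl hmin_large,
    primesUpTo_sqrt_div_eq_filter hr.le x]
  simp only [not_le]
  ring

theorem stmt_7 (x r : ℝ) (hx : 0 < x) (hr : 1 < r) (hrx : r ≤ x) :
    (C r x : ℝ) =
      -(∑ p ∈ (Finset.range (⌊Real.sqrt x⌋₊ + 1)).filter Nat.Prime, (pi (p : ℝ) : ℝ))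
      + ∑ p ∈ (Finset.range (⌊Real.sqrt (x / r)⌋₊ + 1)).filter Nat.Prime, (pi (r * p) : ℝ)
      + ∑ p ∈ ((Finset.range (⌊Real.sqrt x⌋₊ + 1)).filter
          (fun p => Nat.Prime p ∧ Real.sqrt (x / r) < (p : ℝ))), (pi (x / p) : ℝ) :=
  stmt_7_general x r hr
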